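/- arXiv:1001.0967 — 5 statements merged into one kernel-verified Lean document; each statement's English description precedes it below -/
import Mathlib

section
/- Let β : V × V' → W be a bilinear map between finite-dimensional real vector spaces, and let y ∈ V' be such that the linear map β_y : V → W, x ↦ β(x,y), has maximal rank among all β_z with z ∈ V'. Then for every z ∈ V', β_z(ker β_y) ⊆ Im β_y. -/
/-!
If `x ∈ ker β_y` but `β_z x ∉ Im β_y`, then for `t ≠ 0` the image of `β_{y+tz} = β_y + t β_z`
contains `β_z x = β_{y+tz}(x / t)` together with the perturbations `β_y vᵢ + t β_z vᵢ` of a basis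
`β_y vᵢ` of `Im β_y`. At `t = 0` these `rank β_y + 1` vectors are linearly independent, and linear
independence is an open condition, so for small `t ≠ 0` the rank of `β_{y+tz}` exceeds that of
`β_y`.
-/

open Filter Topology Module LinearMap Submodule

theorem LinearIndependent.eventually_add_smul {W ι : Type*} [AddCommGroup W] [Module ℝ W]
    [FiniteDimensional ℝ W] [Finite ι] {a : ι → W} (ha : LinearIndependent ℝ a) (b : ι → W) :
    ∀ᶠ t : ℝ in 𝓝 0, LinearIndependent ℝ (a + t • b) := by
  let e := (Module.finBasis ℝ W).equivFun
  have hcont : Continuous fun t : ℝ => e.toLinearMap ∘ (a + t • b) := by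
    refine continuous_pi fun i => ?_
    simp only [Function.comp_apply, Pi.add_apply, Pi.smul_apply, map_add, map_smul]
    fun_prop
  have h0 : LinearIndependent ℝ (e.toLinearMap ∘ a) := ha.map' _ e.ker
  filter_upwards [(hcont.tendsto 0).eventually (by simpa using h0.eventually)] with t ht
  exact ht.of_comp _

theorem LinearMap.eventually_finrank_range_lt_add_smul {V W : Type*} [AddCommGroup V]
    [Module ℝ V] [AddCommGroup W] [Module ℝ W] [FiniteDimensional ℝ W] (f g : V →ₗ[ℝ] W)
    {x : V} (hx : x ∈ ker f) (hgx : g x ∉ range f) :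
    ∀ᶠ t : ℝ in 𝓝[≠] 0, finrank ℝ (range f) < finrank ℝ (range (f + t • g)) := by
  obtain ⟨s, hs, hind⟩ :=
    LinearMap.le_rank_iff_exists_linearIndependent_finset.mp (finrank_eq_rank ℝ (range f)).le
  let a : Option s → W := fun o => Option.casesOn' o (g x) fun i => f i
  let b : Option s → W := fun o => Option.casesOn' o 0 fun i => g i
  have ha : LinearIndependent ℝ a := by
    refine linearIndependent_option'.mpr ⟨hind, fun h => hgx (span_le.mpr ?_ h)⟩
    rintro _ ⟨i, rfl⟩
    exact mem_range_self f i
  have hmem : ∀ t ≠ (0 : ℝ), ∀ o, (a + t • b) o ∈ range (f + t • g) := by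
    rintro t ht (_ | i)
    · exact ⟨t⁻¹ • x, by simp [a, b, mem_ker.mp hx, smul_smul, ht]⟩
    · exact ⟨i, by simp [a, b]⟩
  filter_upwards [eventually_nhdsWithin_of_eventually_nhds (ha.eventually_add_smul b),
    self_mem_nhdsWithin] with t ht ht0
  calc finrank ℝ (range f) < Fintype.card (Option s) := by simp [hs]
    _ = finrank ℝ (span ℝ (Set.range (a + t • b))) := (finrank_span_eq_card ht).symm
    _ ≤ finrank ℝ (range (f + t • g)) :=
      Submodule.finrank_mono (span_le.mpr (Set.range_subset_iff.mpr (hmem t ht0)))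

theorem stmt_0_general {V V' W : Type*} [AddCommGroup V] [Module ℝ V]
    [AddCommGroup V'] [Module ℝ V']
    [AddCommGroup W] [Module ℝ W] [FiniteDimensional ℝ W]
    (β : V →ₗ[ℝ] V' →ₗ[ℝ] W) (y : V')
    (hmax : ∀ z : V', Module.finrank ℝ (LinearMap.range (β.flip z)) ≤
      Module.finrank ℝ (LinearMap.range (β.flip y))) :
    ∀ z : V', ∀ x ∈ LinearMap.ker (β.flip y), β.flip z x ∈ LinearMap.range (β.flip y) := by
  intro z x hx
  by_contra hzx
  obtain ⟨t, ht⟩ := ((β.flip y).eventually_finrank_range_lt_add_smul (β.flip z) hx hzx).exists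
  rw [← map_smul, ← map_add] at ht
  exact (hmax (y + t • z)).not_gt ht

/-- Moore's lemma: if `β_y` has maximal rank among the maps `β_z`, then for every `z`,
`β_z` maps the kernel of `β_y` into the image of `β_y`. -/
theorem stmt_0 {V V' W : Type*} [AddCommGroup V] [Module ℝ V] [FiniteDimensional ℝ V]
    [AddCommGroup V'] [Module ℝ V'] [FiniteDimensional ℝ V']
    [AddCommGroup W] [Module ℝ W] [FiniteDimensional ℝ W]
    (β : V →ₗ[ℝ] V' →ₗ[ℝ] W) (y : V')
    (hmax : ∀ z : V', Module.finrank ℝ (LinearMap.range (β.flip z)) ≤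
      Module.finrank ℝ (LinearMap.range (β.flip y))) :
    ∀ z : V', ∀ x ∈ LinearMap.ker (β.flip y), β.flip z x ∈ LinearMap.range (β.flip y) :=
  stmt_0_general β y hmax
end

section
/- Let A be a graded-commutative ring (e.g. the real cohomology ring of a compact manifold), V a finite-dimensional real subspace of a homogeneous component A_s such that c^k ≠ 0 for all nonzero c ∈ V. If b ∈ A_{s(r-1)} is such that the linear map V → A_{sr}, c ↦ cb, has maximal rank among all such multiplication maps by elements of A_{s(r-1)}, and r < k, then the map c ↦ cb is injective on V. -/
/-!
Write `L = (· * b)` and `M = (· * c ^ (r - 1))` as maps `V → A_{sr}`. Since `b + t c^(r-1)`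
is again of degree `s(r-1)`, maximality says that `L` has maximal rank in the pencil `L + t M`.
This forces `M (ker L) ⊆ range L`: otherwise, for `u ∈ ker L` with `M u ∉ range L`, the
vectors `(L + t M)(σ y)` (for `σ` a section of `L` over its range) together with `M u` stay
independent for all but finitely many `t`, so that `L + t M` would have larger rank. Thus a
`c ∈ V` with `c b = 0` satisfies `c^r = x b` for some `x ∈ V`, whence
`c^k = c^(k-r-1) x (c b) = 0`. For `r = 0` (where `r - 1 = 0` in `ℕ`), taking `b' = 1`
shows directly that `L` is injective.
-/

open Function LinearMap Module Submodule

namespace LinearMap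

variable {K E F : Type*} [Field K] [AddCommGroup E] [Module K E] [FiniteDimensional K E]
  [AddCommGroup F] [Module K F]

theorem injective_of_finrank_le_finrank_range {L : E →ₗ[K] F}
    (h : finrank K E ≤ finrank K (range L)) : Injective L := by
  have := L.finrank_range_add_finrank_ker
  rw [← ker_eq_bot, ← Submodule.finrank_eq_zero]
  omega

/-- `T₀ + t • T₁` fails to be injective only when `-t⁻¹` is an eigenvalue of `P ∘ T₁`, for a left
inverse `P` of `T₀`. -/
theorem exists_ne_zero_injective_add_smul [Infinite K] (T₀ T₁ : E →ₗ[K] F)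
    (h₀ : Injective T₀) : ∃ t : K, t ≠ 0 ∧ Injective (T₀ + t • T₁) := by
  obtain ⟨P, hP⟩ := T₀.exists_leftInverse_of_injective (ker_eq_bot.mpr h₀)
  set C : Module.End K E := P ∘ₗ T₁
  have hfin : {t : K | t = 0 ∨ C.HasEigenvalue (-t⁻¹)}.Finite :=
    (Set.finite_singleton 0).union <|
      C.finite_hasEigenvalue.preimage (neg_injective.comp inv_injective).injOn
  obtain ⟨t, ht⟩ := hfin.exists_notMem
  simp only [Set.mem_ofPred_eq, not_or] at ht
  refine ⟨t, ht.1, (injective_iff_map_eq_zero _).mpr fun x hx => ?_⟩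
  by_contra hx0
  have hPx : x + t • C x = 0 := by
    have := congrArg P hx
    rwa [add_apply, smul_apply, map_add, map_smul, ← comp_apply P T₀, hP, id_apply,
      map_zero] at this
  have hCx : C x = (-t⁻¹) • x :=
    calc C x = t⁻¹ • (t • C x) := (inv_smul_smul₀ ht.1 _).symm
      _ = (-t⁻¹) • x := by rw [eq_neg_of_add_eq_zero_right hPx, smul_neg, neg_smul]
  exact ht.2 <|
    Module.End.hasEigenvalue_of_hasEigenvector ⟨Module.End.mem_eigenspace_iff.mpr hCx, hx0⟩

theorem map_mem_range_of_forall_finrank_range_add_smul_le [Infinite K] (L M : E →ₗ[K] F)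
    (hmax : ∀ t : K, finrank K (range (L + t • M)) ≤ finrank K (range L)) {u : E}
    (hu : L u = 0) : M u ∈ range L := by
  by_contra hMu
  obtain ⟨σ, hσ⟩ := L.rangeRestrict.exists_rightInverse_of_surjective L.range_rangeRestrict
  have hLσ : ∀ y, L (σ y) = y := fun y => congrArg Subtype.val (LinearMap.congr_fun hσ y)
  set T₀ : range L × K →ₗ[K] F := (range L).subtype.coprod (toSpanSingleton K F (M u))
  have hT₀ : Injective T₀ := by
    have hMu0 : M u ≠ 0 := fun h => hMu (h ▸ zero_mem _)
    rw [← ker_eq_bot, ker_coprod_of_disjoint_range, ker_subtype, ker_toSpanSingleton K hMu0,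
      Submodule.prod_bot]
    rwa [range_subtype, range_toSpanSingleton, disjoint_span_singleton' hMu0]
  obtain ⟨t, ht, hinj⟩ := exists_ne_zero_injective_add_smul T₀ ((M ∘ₗ σ).coprod 0) hT₀
  have hle : range (T₀ + t • (M ∘ₗ σ).coprod 0) ≤ range (L + t • M) := by
    rintro _ ⟨⟨y, a⟩, rfl⟩
    refine ⟨σ y + (a / t) • u, ?_⟩
    simp only [T₀, add_apply, smul_apply, map_add, map_smul, hLσ, hu, smul_zero, add_zero,
      smul_add, smul_smul, div_mul_cancel₀ a ht, coprod_apply, subtype_apply,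
      toSpanSingleton_apply, coe_comp, Function.comp_apply, zero_apply]
    abel
  have := Submodule.finrank_mono hle
  rw [finrank_range_of_inj hinj, finrank_prod, finrank_self] at this
  have := hmax t
  omega

end LinearMap

/-- If `V ⊆ A_s` is a subspace with `c^k ≠ 0` for all nonzero `c ∈ V`, `b ∈ A_{s(r-1)}`
realizes the maximal rank of the multiplication maps `c ↦ c*b'`, and `r < k`, then
multiplication by `b` is injective on `V`. -/
theorem stmt_1 {A : Type*} [CommRing A] [Algebra ℝ A] (𝒜 : ℕ → Submodule ℝ A)
    [GradedRing 𝒜] (s r k : ℕ) (V : Submodule ℝ A) [FiniteDimensional ℝ V]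
    (hV : V ≤ 𝒜 s)
    (hpow : ∀ c ∈ V, c ≠ 0 → c ^ k ≠ 0)
    (b : A) (hb : b ∈ 𝒜 (s * (r - 1)))
    (hmax : ∀ b' ∈ 𝒜 (s * (r - 1)),
      Module.finrank ℝ (LinearMap.range ((LinearMap.mulRight ℝ b').comp V.subtype)) ≤
      Module.finrank ℝ (LinearMap.range ((LinearMap.mulRight ℝ b).comp V.subtype)))
    (hrk : r < k) :
    ∀ c ∈ V, c * b = 0 → c = 0 := by
  intro c hc hcb
  set L := (LinearMap.mulRight ℝ b).comp V.subtype
  have hLc : L ⟨c, hc⟩ = 0 := hcb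
  obtain rfl | hr := Nat.eq_zero_or_pos r
  · have hone : (1 : A) ∈ 𝒜 (s * (0 - 1)) := by simpa using SetLike.one_mem_graded 𝒜
    have hL : Injective L := injective_of_finrank_le_finrank_range <| by
      have := hmax 1 hone
      rwa [mulRight_one, LinearMap.id_comp, range_subtype] at this
    simpa using hL (hLc.trans (map_zero L).symm)
  have hcr : c ^ (r - 1) ∈ 𝒜 (s * (r - 1)) := by
    simpa [mul_comm] using SetLike.pow_mem_graded (r - 1) (hV hc)
  set M := (LinearMap.mulRight ℝ (c ^ (r - 1))).comp V.subtype
  have hpencil (t : ℝ) :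
      (LinearMap.mulRight ℝ (b + t • c ^ (r - 1))).comp V.subtype = L + t • M := by
    ext
    simp [L, M, mul_add]
  obtain ⟨x, hx⟩ := L.map_mem_range_of_forall_finrank_range_add_smul_le M
    (fun t => hpencil t ▸ hmax _ (add_mem hb (Submodule.smul_mem _ t hcr))) hLc
  have hx' : (x : A) * b = c * c ^ (r - 1) := by simpa [L, M] using hx
  by_contra hc0
  refine hpow c hc hc0 ?_
  obtain ⟨i, rfl⟩ : ∃ i, r = i + 1 := ⟨r - 1, by omega⟩
  obtain ⟨j, rfl⟩ : ∃ j, k = i + 2 + j := ⟨k - (i + 2), by omega⟩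
  simp only [add_tsub_cancel_right] at hx'
  linear_combination (-c ^ (j + 1)) * hx' + ((x : A) * c ^ j) * hcb
end

section
/- For every m ∈ ℕ, the complete homogeneous symmetric polynomial h_m in n variables equals the determinant det(σ_{j−i+1})_{1≤i,j≤m}, where σ_k are the elementary symmetric polynomials (with σ_k = 0 for k > n or k < 0, and σ_0 = 1). -/
/-!
The generating series `∏ i, (1 + x i * t)` of the elementary symmetric polynomials and
`∏ i, (1 - x i * t)⁻¹ = ∑ h_m t^m` are reciprocal up to `t ↦ -t`. If `f * g = 1` in `R⟦X⟧`, the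
lower-triangular Toeplitz matrices of `f` and `g` of size `m + 1` are mutually inverse, so the
corner entry `(m, 0)` of the second one, `coeff m g`, is a cofactor of the first one by Cramer's
rule; deleting the first row and the last column of a lower-triangular Toeplitz matrix leaves
exactly the Hessenberg matrix `(coeff (j + 1 - i) f)`.
-/

open Finset Matrix PowerSeries

namespace PowerSeries

variable {R : Type*} [CommRing R]

noncomputable def lowerToeplitz (m : ℕ) (f : R⟦X⟧) : Matrix (Fin m) (Fin m) R :=
  of fun i j => if (j : ℕ) ≤ i then coeff ((i : ℕ) - j) f else 0

theorem lowerToeplitz_mul (m : ℕ) (f g : R⟦X⟧) :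
    lowerToeplitz m f * lowerToeplitz m g = lowerToeplitz m (f * g) := by
  ext i j
  set F : ℕ → R := fun k =>
    (if k ≤ (i : ℕ) then coeff ((i : ℕ) - k) f else 0) * (if (j : ℕ) ≤ k then coeff (k - j) g else 0)
  have hF : ∀ k ∉ Ico (j : ℕ) (i + 1), F k = 0 := fun k hk => by
    rw [mem_Ico, not_and_or, not_le, not_lt] at hk
    rcases hk with hk | hk
    · simp only [F, if_neg hk.not_ge, mul_zero]
    · simp only [F, if_neg (show ¬ k ≤ (i : ℕ) by omega), zero_mul]
  calc (lowerToeplitz m f * lowerToeplitz m g) i j = ∑ k ∈ range m, F k :=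
        Fin.sum_univ_eq_sum_range F m
    _ = ∑ k ∈ Ico (j : ℕ) (i + 1), F k := by
        refine (sum_subset (fun k hk => ?_) fun k _ hk => hF k hk).symm
        simp only [mem_Ico, mem_range] at hk ⊢
        omega
    _ = lowerToeplitz m (f * g) i j := by
        simp only [lowerToeplitz, of_apply]
        split_ifs with hji
        · rw [sum_Ico_eq_sum_range, mul_comm f, coeff_mul,
            Nat.sum_antidiagonal_eq_sum_range_succ fun p q => coeff p g * coeff q f,
            show (i : ℕ) + 1 - j = ((i : ℕ) - j).succ by omega]
          refine sum_congr rfl fun q hq => ?_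
          rw [mem_range] at hq
          simp only [F, if_pos (show (j : ℕ) + q ≤ i by omega), if_pos (Nat.le_add_right _ _),
            Nat.add_sub_cancel_left, mul_comm, show (i : ℕ) - (j + q) = i - j - q by omega]
        · exact sum_eq_zero fun k hk => hF k (by simp only [mem_Ico] at hk ⊢; omega)

theorem lowerToeplitz_one (m : ℕ) : lowerToeplitz m (1 : R⟦X⟧) = 1 := by
  ext i j
  simp only [lowerToeplitz, of_apply, coeff_one, one_apply, Fin.ext_iff]
  split_ifs <;> first | rfl | omega

theorem det_lowerToeplitz (m : ℕ) (f : R⟦X⟧) :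
    (lowerToeplitz m f).det = constantCoeff f ^ m := by
  have : (lowerToeplitz m f).IsLowerTriangular := fun i j hij => if_neg (by simpa using hij)
  rw [det_of_isLowerTriangular _ this]
  simp [lowerToeplitz]

theorem constantCoeff_pow_succ_mul_coeff_eq_det {f g : R⟦X⟧} (hfg : f * g = 1) (m : ℕ) :
    constantCoeff f ^ (m + 1) * coeff m g = (-1) ^ m *
      det (of fun i j : Fin m => if (i : ℕ) ≤ j + 1 then coeff ((j : ℕ) + 1 - i) f else 0) := by
  set E := lowerToeplitz (m + 1) f
  have hadj : adjugate E = det E • lowerToeplitz (m + 1) g := by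
    calc adjugate E = adjugate E * (E * lowerToeplitz (m + 1) g) := by
          rw [lowerToeplitz_mul, hfg, lowerToeplitz_one, Matrix.mul_one]
      _ = det E • lowerToeplitz (m + 1) g := by
          rw [← Matrix.mul_assoc, adjugate_mul, smul_mul_assoc, Matrix.one_mul]
  have hminor : E.submatrix Fin.succ Fin.castSucc =
      (of fun i j : Fin m => if (i : ℕ) ≤ j + 1 then coeff ((j : ℕ) + 1 - i) f else 0)ᵀ := by
    ext i j
    simp only [E, lowerToeplitz, submatrix_apply, transpose_apply, of_apply, Fin.val_castSucc,
      Fin.val_succ]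
  have h := congr_fun₂ hadj (Fin.last m) 0
  rw [adjugate_fin_succ_eq_det_submatrix, Matrix.smul_apply, det_lowerToeplitz] at h
  simp only [Fin.succAbove_zero, Fin.succAbove_last, hminor, det_transpose] at h
  simpa [lowerToeplitz] using h.symm

theorem coeff_prod_one_add_C_mul_X {ι : Type*} (s : Finset ι) (x : ι → R) (k : ℕ) :
    coeff k (∏ i ∈ s, (1 + C (x i) * X)) = ∑ t ∈ s.powersetCard k, ∏ i ∈ t, x i := by
  have hterm : ∀ t : Finset ι, ∏ i ∈ t, C (x i) * X = C (∏ i ∈ t, x i) * X ^ t.card := fun t => by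
    rw [prod_mul_distrib, map_prod, prod_const]
  simp only [prod_one_add, hterm, map_sum, coeff_C_mul_X_pow, powersetCard_eq_filter, sum_filter,
    eq_comm (a := k)]

theorem coeff_prod_mk {n : ℕ} (f : Fin n → ℕ → R) (d : ℕ) :
    coeff d (∏ i, mk (f i)) = ∑ μ ∈ Nat.antidiagonalTuple n d, ∏ i, f i (μ i) := by
  classical
  rw [coeff_prod]
  refine sum_equiv Finsupp.equivFunOnFinite (fun l => ?_) fun l _ => ?_
  · simp [mem_finsuppAntidiag, Nat.mem_antidiagonalTuple]
  · simp [coeff_mk]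

theorem one_add_C_mul_X_mul_mk_neg_pow (a : R) : (1 + C a * X) * mk (fun k => (-a) ^ k) = 1 := by
  have h₁ : 1 + C a * X = rescale (-a) (1 - X) := by simp [rescale_X, sub_eq_add_neg]
  have h₂ : mk (fun k => (-a) ^ k) = rescale (-a) (mk 1) := by simp [rescale_mk]
  rw [h₁, h₂, ← map_mul, mul_comm, mk_one_mul_one_sub_eq_one, map_one]

end PowerSeries

theorem Finset.Nat.sum_antidiagonalTuple_prod_mul_pow {R : Type*} [CommRing R] {n : ℕ} (c : R)
    (x : Fin n → R) (m : ℕ) :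
    ∑ μ ∈ antidiagonalTuple n m, ∏ i, (c * x i) ^ μ i =
      c ^ m * ∑ μ ∈ antidiagonalTuple n m, ∏ i, x i ^ μ i := by
  rw [mul_sum]
  refine sum_congr rfl fun μ hμ => ?_
  rw [← mem_antidiagonalTuple.1 hμ, ← prod_pow_eq_pow_sum, ← prod_mul_distrib]
  simp only [mul_pow]

theorem Finset.Nat.sum_antidiagonalTuple_prod_pow_eq_det {R : Type*} [CommRing R] {n : ℕ}
    (x : Fin n → R) (m : ℕ) :
    ∑ μ ∈ antidiagonalTuple n m, ∏ i, x i ^ μ i =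
      det (of fun i j : Fin m => if (i : ℕ) ≤ j + 1 then
        ∑ s ∈ univ.powersetCard ((j : ℕ) + 1 - i), ∏ i ∈ s, x i else 0) := by
  have hfg : (∏ i, (1 + C (x i) * X)) * ∏ i, PowerSeries.mk (fun k => (-x i) ^ k) = 1 := by
    rw [← prod_mul_distrib]
    exact prod_eq_one fun i _ => one_add_C_mul_X_mul_mk_neg_pow (x i)
  have h := constantCoeff_pow_succ_mul_coeff_eq_det hfg m
  simp only [← coeff_zero_eq_constantCoeff_apply, coeff_prod_one_add_C_mul_X, coeff_prod_mk,
    neg_eq_neg_one_mul (x _), sum_antidiagonalTuple_prod_mul_pow] at h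
  rw [powersetCard_zero, sum_singleton, prod_empty, one_pow, one_mul] at h
  exact (isUnit_neg_one.pow m).mul_left_cancel h

/-- The complete homogeneous symmetric polynomial `h_m` in `n` variables equals
`det(σ_{j−i+1})_{1≤i,j≤m}` where `σ_k` are the elementary symmetric polynomials
(with `σ_k = 0` for `k > n` or `k < 0`, and `σ_0 = 1`). -/
theorem stmt_7 (n m : ℕ) (x : Fin n → ℝ) :
    (∑ μ ∈ Finset.Nat.antidiagonalTuple n m, ∏ i, x i ^ μ i) =
      Matrix.det (fun i j : Fin m =>
        if (i : ℕ) ≤ (j : ℕ) + 1 then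
          ∑ s ∈ Finset.univ.powersetCard ((j : ℕ) + 1 - (i : ℕ)), ∏ i ∈ s, x i
        else 0) :=
  Finset.Nat.sum_antidiagonalTuple_prod_pow_eq_det x m
end

section
/- Let λ be a partition of m with at most n parts and λ' its conjugate partition. Then the multiset identity {λ_i + n − i : 1 ≤ i ≤ n} ∪ {n + j − λ'_j − 1 : 1 ≤ j ≤ m} = {0, 1, 2, …, m + n − 1} holds, with the union being disjoint. -/
/-- For a partition `λ` of `m` with at most `n` parts and conjugate `λ'`, the multisets
`{λ_i + n − i : 1 ≤ i ≤ n}` and `{n + j − λ'_j − 1 : 1 ≤ j ≤ m}` together form, disjointly,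
the multiset `{0, 1, …, m + n − 1}`. -/
theorem stmt_9 (n m : ℕ) (lam : Fin n → ℕ) (hanti : Antitone lam) (hsum : ∑ i, lam i = m) :
    (Finset.univ.val.map fun i : Fin n => lam i + (n - 1 - (i : ℕ))) +
      (Finset.univ.val.map fun j : Fin m =>
        n + (j : ℕ) - (Finset.univ.filter fun i : Fin n => (j : ℕ) + 1 ≤ lam i).card) =
    Multiset.range (m + n) := by
  classical
  set A := (Finset.univ.val.map fun i : Fin n => lam i + (n - 1 - (i : ℕ))) with hAdef
  set B := (Finset.univ.val.map fun j : Fin m =>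
        n + (j : ℕ) - (Finset.univ.filter fun i : Fin n => (j : ℕ) + 1 ≤ lam i).card) with hBdef
  have hcn : ∀ j : ℕ, (Finset.univ.filter fun i : Fin n => j + 1 ≤ lam i).card ≤ n := by
    intro j
    calc (Finset.univ.filter fun i : Fin n => j + 1 ≤ lam i).card
        ≤ (Finset.univ : Finset (Fin n)).card := Finset.card_filter_le _ _
      _ = n := by simp
  have hlm : ∀ i, lam i ≤ m := by
    intro i
    rw [← hsum]
    exact Finset.single_le_sum (fun _ _ => Nat.zero_le _) (Finset.mem_univ i)
  have hcmono : ∀ j1 j2 : ℕ, j1 ≤ j2 →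
      (Finset.univ.filter fun i : Fin n => j2 + 1 ≤ lam i).card ≤
      (Finset.univ.filter fun i : Fin n => j1 + 1 ≤ lam i).card := by
    intro j1 j2 h
    apply Finset.card_le_card
    intro x hx
    simp only [Finset.mem_filter, Finset.mem_univ, true_and] at hx ⊢
    omega
  have hA : A.Nodup := by
    refine Multiset.Nodup.map ?_ Finset.univ.nodup
    intro i1 i2 h
    have key : ∀ a b : Fin n, a < b →
        lam b + (n - 1 - (b : ℕ)) < lam a + (n - 1 - (a : ℕ)) := by
      intro a b hab
      have h1 := hanti hab.le
      have h2 := b.isLt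
      have h3 : (a : ℕ) < (b : ℕ) := hab
      omega
    rcases lt_trichotomy i1 i2 with h' | h' | h'
    · exact absurd h (key _ _ h').ne'
    · exact h'
    · exact absurd h (key _ _ h').ne
  have hB : B.Nodup := by
    refine Multiset.Nodup.map ?_ Finset.univ.nodup
    intro j1 j2 h
    have key : ∀ a b : Fin m, a < b →
        n + (a : ℕ) - (Finset.univ.filter fun i : Fin n => (a : ℕ) + 1 ≤ lam i).card <
        n + (b : ℕ) - (Finset.univ.filter fun i : Fin n => (b : ℕ) + 1 ≤ lam i).card := by
      intro a b hab
      have h1 := hcmono (a : ℕ) (b : ℕ) hab.le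
      have h2 := hcn (a : ℕ)
      have h3 := hcn (b : ℕ)
      have h4 : (a : ℕ) < (b : ℕ) := hab
      omega
    rcases lt_trichotomy j1 j2 with h' | h' | h'
    · exact absurd h (key _ _ h').ne
    · exact h'
    · exact absurd h (key _ _ h').ne'
  have hdisj : Disjoint A B := by
    rw [Multiset.disjoint_left]
    intro x hxA hxB
    rw [hAdef, Multiset.mem_map] at hxA
    rw [hBdef, Multiset.mem_map] at hxB
    obtain ⟨i, -, hi⟩ := hxA
    obtain ⟨j, -, hj⟩ := hxB
    have h2 := hcn (j : ℕ)
    have h3 := i.isLt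
    by_cases hcase : (j : ℕ) + 1 ≤ lam i
    · have hsub : Finset.Iic i ⊆ Finset.univ.filter fun i' : Fin n => (j : ℕ) + 1 ≤ lam i' := by
        intro x' hx'
        rw [Finset.mem_Iic] at hx'
        simp only [Finset.mem_filter, Finset.mem_univ, true_and]
        exact hcase.trans (hanti hx')
      have hcard := Finset.card_le_card hsub
      rw [Fin.card_Iic] at hcard
      omega
    · have hsub : (Finset.univ.filter fun i' : Fin n => (j : ℕ) + 1 ≤ lam i') ⊆ Finset.Iio i := by
        intro x' hx'
        simp only [Finset.mem_filter, Finset.mem_univ, true_and] at hx'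
        rw [Finset.mem_Iio]
        by_contra hle
        exact hcase ((le_trans hx' (hanti (not_lt.mp hle))))
      have hcard := Finset.card_le_card hsub
      rw [Fin.card_Iio] at hcard
      omega
  have hnodup : (A + B).Nodup := Multiset.nodup_add.mpr ⟨hA, hB, hdisj⟩
  have hsubset : A + B ⊆ Multiset.range (m + n) := by
    intro x hx
    rw [Multiset.mem_range]
    rcases Multiset.mem_add.mp hx with hx' | hx'
    · rw [hAdef, Multiset.mem_map] at hx'
      obtain ⟨i, -, hi⟩ := hx'
      have := hlm i
      have := i.isLt
      omega
    · rw [hBdef, Multiset.mem_map] at hx'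
      obtain ⟨j, -, hj⟩ := hx'
      have := j.isLt
      omega
  have hle : A + B ≤ Multiset.range (m + n) := (Multiset.le_iff_subset hnodup).mpr hsubset
  refine Multiset.eq_of_le_of_card_le hle ?_
  simp [hAdef, hBdef, Nat.add_comm]
end

section
/- Let m be a positive even integer and fix T > 1. For r ∈ ℝ let F_r(t) = Σ_{j=0}^{m/2} C(m+1, 2j+1) r^{m/2 − j} t^{2j}, where r^{m/2−j} is the ordinary integer power of the real number r (r may be negative). Then F_r(t) ≠ 0 for all real t with |t| ≥ T if and only if r > −T² (1 − cos(π/(m+1)))/(1 + cos(π/(m+1))). -/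
open Real Finset

-- pair-splitting of a range sum
lemma sum_split (N : ℕ) (f : ℕ → ℝ) :
    ∑ k ∈ Finset.range (2 * N), f k = ∑ j ∈ Finset.range N, (f (2 * j) + f (2 * j + 1)) := by
  induction N with
  | zero => simp
  | succ n ih =>
      rw [Finset.sum_range_succ, ← ih, mul_add, mul_one]
      rw [show 2 * n + 2 = (2*n) + 1 + 1 by ring, Finset.sum_range_succ, Finset.sum_range_succ]
      ring

-- key identity
lemma key (n : ℕ) (s t : ℝ) :
    t * ∑ j ∈ Finset.range (n + 1),
        ((2 * n + 1).choose (2 * j + 1) : ℝ) * (-(s ^ 2)) ^ (n - j) * t ^ (2 * j)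
      = (-1 : ℝ) ^ n * (((t : ℂ) * Complex.I + (s : ℂ)) ^ (2 * n + 1)).im := by
  rw [add_pow]
  rw [show 2 * n + 1 + 1 = 2 * (n + 1) by ring]
  rw [Complex.im_sum, sum_split]
  rw [Finset.mul_sum, Finset.mul_sum]
  refine Finset.sum_congr rfl fun j hj => ?_
  have hj' : j ≤ n := Nat.lt_succ_iff.mp (Finset.mem_range.mp hj)
  have h1 : ((t : ℂ) * Complex.I) ^ (2 * j) = (((-1 : ℝ)^j * t ^ (2*j) : ℝ) : ℂ) := by
    rw [mul_pow, pow_mul, pow_mul, Complex.I_sq]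
    push_cast
    ring
  have h2 : ((t : ℂ) * Complex.I) ^ (2 * j + 1)
      = (((-1 : ℝ)^j * t ^ (2*j+1) : ℝ) : ℂ) * Complex.I := by
    rw [pow_succ, h1]
    push_cast
    ring
  rw [h1, h2]
  have e1 : (((-1 : ℝ)^j * t ^ (2*j) : ℝ) : ℂ) * (s:ℂ) ^ (2*n+1 - 2*j)
        * ((2*n+1).choose (2*j) : ℂ)
      = (((-1 : ℝ)^j * t ^ (2*j) * s ^ (2*n+1-2*j) * ((2*n+1).choose (2*j) : ℝ) : ℝ) : ℂ) := by
    push_cast; ring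
  have e2 : (((-1 : ℝ)^j * t ^ (2*j+1) : ℝ) : ℂ) * Complex.I * (s:ℂ) ^ (2*n+1 - (2*j+1))
        * ((2*n+1).choose (2*j+1) : ℂ)
      = (((-1 : ℝ)^j * t ^ (2*j+1) * s ^ (2*n+1-(2*j+1)) * ((2*n+1).choose (2*j+1) : ℝ) : ℝ) : ℂ)
        * Complex.I := by
    push_cast; ring
  rw [e1, e2, Complex.ofReal_im, Complex.mul_I_im, Complex.ofReal_re, zero_add]
  have hsub : 2*n+1 - (2*j+1) = 2*(n-j) := by omega
  rw [hsub]
  have hns : (-(s^2 : ℝ)) ^ (n - j) = (-1)^(n-j) * s ^ (2*(n-j)) := by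
    rw [neg_pow, pow_mul]
  rw [hns]
  have hsign : (-1:ℝ)^(n-j) = (-1:ℝ)^n * (-1:ℝ)^j := by
    rw [← pow_add]
    have h : n + j = (n - j) + 2*j := by omega
    rw [h, pow_add, pow_mul]
    simp
  rw [hsign]
  ring

lemma polar (s t : ℝ) (hs : 0 < s) (N : ℕ) :
    (((t : ℂ) * Complex.I + (s : ℂ)) ^ N).im
      = (s / Real.cos (Real.arctan (t / s))) ^ N
          * Real.sin (N * Real.arctan (t / s)) := by
  set φ := Real.arctan (t / s) with hφ
  have hc : 0 < Real.cos φ := Real.cos_arctan_pos _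
  have hz : (t : ℂ) * Complex.I + (s : ℂ)
      = ((s / Real.cos φ : ℝ) : ℂ) * Complex.exp ((φ : ℂ) * Complex.I) := by
    rw [Complex.exp_mul_I, ← Complex.ofReal_cos, ← Complex.ofReal_sin]
    apply Complex.ext
    · simp only [Complex.add_re, Complex.mul_re, Complex.ofReal_re, Complex.ofReal_im,
        Complex.I_re, Complex.I_im, Complex.add_im, Complex.mul_im]
      field_simp
      ring
    · simp only [Complex.add_re, Complex.mul_re, Complex.ofReal_re, Complex.ofReal_im,
        Complex.I_re, Complex.I_im, Complex.add_im, Complex.mul_im]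
      have htan : Real.sin φ = (t / s) * Real.cos φ := by
        have := Real.tan_arctan (t / s)
        rw [← hφ, Real.tan_eq_sin_div_cos] at this
        field_simp at this ⊢
        linarith [this]
      rw [htan]
      field_simp
      ring
  rw [hz, mul_pow, ← Complex.ofReal_pow, ← Complex.exp_nat_mul]
  have : (N : ℂ) * ((φ : ℂ) * Complex.I) = ((N * φ : ℝ) : ℂ) * Complex.I := by
    push_cast; ring
  rw [this, Complex.exp_mul_I, ← Complex.ofReal_cos, ← Complex.ofReal_sin]
  simp only [Complex.mul_im, Complex.add_im, Complex.add_re, Complex.ofReal_re,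
    Complex.ofReal_im, Complex.mul_I_im, Complex.mul_I_re, Complex.I_im, Complex.I_re,
    Complex.mul_re]
  ring

set_option maxHeartbeats 2000000 in
/-- For `m` even positive and `T > 1`, the polynomial
`F_r(t) = Σ_{j=0}^{m/2} C(m+1, 2j+1) r^{m/2−j} t^{2j}` (integer powers of `r`)
is nonzero for all `|t| ≥ T` if and only if
`r > −T² (1 − cos(π/(m+1)))/(1 + cos(π/(m+1)))`. -/
theorem stmt_17 (m : ℕ) (hm : 0 < m) (hme : Even m) (T : ℝ) (hT : 1 < T) (r : ℝ) :
    (∀ t : ℝ, T ≤ |t| →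
        ∑ j ∈ Finset.range (m / 2 + 1),
          ((m + 1).choose (2 * j + 1) : ℝ) * r ^ ((m / 2 : ℤ) - (j : ℤ)) * t ^ (2 * j) ≠ 0) ↔
      r > -T ^ 2 * (1 - Real.cos (π / (m + 1))) / (1 + Real.cos (π / (m + 1))) := by
  obtain ⟨n, hn⟩ := hme
  have hn0 : 0 < n := by omega
  have hd : m / 2 = n := by omega
  have hm1 : m + 1 = 2 * n + 1 := by omega
  set β := π / (2 * (2 * n + 1)) with hβ
  have hβpos : 0 < β := by
    apply div_pos Real.pi_pos; positivity
  have hβlt : β < π / 2 := by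
    rw [hβ, div_lt_div_iff₀ (by positivity) (by norm_num)]
    have h1 : (1:ℝ) ≤ (n:ℝ) := by exact_mod_cast hn0
    nlinarith [Real.pi_pos]
  have hcosβ : 0 < Real.cos β := Real.cos_pos_of_mem_Ioo ⟨by linarith, hβlt⟩
  have hsinβ : 0 < Real.sin β := Real.sin_pos_of_pos_of_lt_pi hβpos (by linarith [Real.pi_pos])
  have htanβ : 0 < Real.tan β := by rw [Real.tan_eq_sin_div_cos]; positivity
  have hne : (2 * (n:ℝ) + 1) ≠ 0 := by positivity
  -- threshold rewrite
  have hmr : (m : ℝ) + 1 = 2 * (n:ℝ) + 1 := by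
    rw [hn]; push_cast; ring
  have hα : π / (↑m + 1) = 2 * β := by
    rw [hmr, hβ]
    field_simp
  have hpyth : Real.sin β ^ 2 + Real.cos β ^ 2 = 1 := Real.sin_sq_add_cos_sq β
  have h1c : 1 - Real.cos (2 * β) = 2 * Real.sin β ^ 2 := by
    rw [Real.cos_two_mul]; nlinarith [hpyth]
  have h2c : 1 + Real.cos (2 * β) = 2 * Real.cos β ^ 2 := by
    rw [Real.cos_two_mul]; ring
  have hthresh : -T ^ 2 * (1 - Real.cos (π / (m + 1))) / (1 + Real.cos (π / (m + 1)))
      = -(T ^ 2 * Real.tan β ^ 2) := by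
    rw [hα, h1c, h2c, Real.tan_eq_sin_div_cos, div_pow]
    field_simp
  rw [hthresh]
  -- rewrite the sum into natural-power form
  have hsum : ∀ (r t : ℝ),
      (∑ j ∈ Finset.range (m / 2 + 1),
          ((m + 1).choose (2 * j + 1) : ℝ) * r ^ ((m / 2 : ℤ) - (j : ℤ)) * t ^ (2 * j))
        = ∑ j ∈ Finset.range (n + 1),
            ((2 * n + 1).choose (2 * j + 1) : ℝ) * r ^ (n - j) * t ^ (2 * j) := by
    intro r t
    rw [hd, hm1]
    refine Finset.sum_congr rfl fun j hj => ?_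
    have hj' : j ≤ n := Nat.lt_succ_iff.mp (Finset.mem_range.mp hj)
    rw [show ((m : ℤ) / 2 - (j : ℤ)) = ((n - j : ℕ) : ℤ) by omega, zpow_natCast]
  simp only [hsum]
  -- the angle identity (2n+1)(π/2 - β) = nπ
  have hangle : (2 * (n:ℝ) + 1) * (π / 2 - β) = n * π := by
    rw [hβ]
    field_simp
    ring
  constructor
  · -- forward: contrapositive
    intro h
    by_contra hr
    push_neg at hr
    set u := -r with hu
    have hu1 : T ^ 2 * Real.tan β ^ 2 ≤ u := by rw [hu]; linarith
    have hu0 : 0 < u := lt_of_lt_of_le (by positivity) hu1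
    set s := Real.sqrt u with hs
    have hs0 : 0 < s := Real.sqrt_pos.mpr hu0
    have hsu : s ^ 2 = u := Real.sq_sqrt hu0.le
    have hsT : T * Real.tan β ≤ s := by
      have h2 : T * Real.tan β = Real.sqrt ((T * Real.tan β) ^ 2) :=
        (Real.sqrt_sq (by positivity)).symm
      rw [h2, hs]
      exact Real.sqrt_le_sqrt (by nlinarith)
    set t₀ := s / Real.tan β with ht₀
    have ht₀T : T ≤ t₀ := (le_div_iff₀ htanβ).mpr hsT
    have ht₀0 : 0 < t₀ := lt_of_lt_of_le (by linarith) ht₀T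
    have habs : T ≤ |t₀| := by rwa [abs_of_pos ht₀0]
    apply h t₀ habs
    have hrs : r = -(s ^ 2) := by rw [hsu, hu]; ring
    rw [hrs]
    have hk := key n s t₀
    have hp := polar s t₀ hs0 (2 * n + 1)
    have ht0s : t₀ / s = Real.tan (π / 2 - β) := by
      rw [Real.tan_pi_div_two_sub, ht₀]
      field_simp
    have hφ : Real.arctan (t₀ / s) = π / 2 - β := by
      rw [ht0s, Real.arctan_tan (by linarith) (by linarith)]
    have hzero : Real.sin ((2 * n + 1 : ℕ) * Real.arctan (t₀ / s)) = 0 := by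
      rw [hφ]
      push_cast
      rw [hangle]
      exact Real.sin_nat_mul_pi n
    rw [hzero, mul_zero] at hp
    rw [hp, mul_zero] at hk
    have := mul_eq_zero.mp hk
    rcases this with h' | h'
    · exact absurd h' ht₀0.ne'
    · exact h'
  · -- backward
    intro hr t ht
    -- reduce to |t|
    have habs : ∀ (r : ℝ), (∑ j ∈ Finset.range (n + 1),
          ((2 * n + 1).choose (2 * j + 1) : ℝ) * r ^ (n - j) * t ^ (2 * j))
        = ∑ j ∈ Finset.range (n + 1),
          ((2 * n + 1).choose (2 * j + 1) : ℝ) * r ^ (n - j) * |t| ^ (2 * j) := by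
      intro r
      refine Finset.sum_congr rfl fun j hj => ?_
      rw [pow_mul, pow_mul, sq_abs]
    rw [habs]
    set a := |t| with ha
    have haT : T ≤ a := ht
    have ha0 : 0 < a := lt_of_lt_of_le (by linarith) haT
    rcases lt_trichotomy r 0 with hneg | hzero | hpos
    · -- r < 0 : the interesting case
      set u := -r with hu
      have hu0 : 0 < u := by rw [hu]; linarith
      have hu1 : u < T ^ 2 * Real.tan β ^ 2 := by rw [hu]; linarith
      set s := Real.sqrt u with hs
      have hs0 : 0 < s := Real.sqrt_pos.mpr hu0
      have hsu : s ^ 2 = u := Real.sq_sqrt hu0.le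
      have hsT : s < T * Real.tan β := by
        have h2 : u < (T * Real.tan β) ^ 2 := by nlinarith
        have h3 := Real.sqrt_lt_sqrt hu0.le h2
        rwa [Real.sqrt_sq (by positivity)] at h3
      have hrs : r = -(s ^ 2) := by rw [hsu, hu]; ring
      rw [hrs]
      have hk := key n s a
      have hp := polar s a hs0 (2 * n + 1)
      set φ := Real.arctan (a / s) with hφd
      have hφlt : φ < π / 2 := Real.arctan_lt_pi_div_two _
      have hφgt : π / 2 - β < φ := by
        have hratio : Real.tan (π / 2 - β) < a / s := by
          rw [Real.tan_pi_div_two_sub]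
          rw [inv_eq_one_div, div_lt_div_iff₀ htanβ hs0]
          nlinarith
        calc π / 2 - β = Real.arctan (Real.tan (π / 2 - β)) :=
              (Real.arctan_tan (by linarith) (by linarith)).symm
          _ < φ := Real.arctan_strictMono hratio
      -- x := (2n+1)φ lies in (nπ, nπ + π/2)
      have hx1 : (n : ℝ) * π < (2 * (n:ℝ) + 1) * φ := by
        calc (n:ℝ) * π = (2 * (n:ℝ) + 1) * (π / 2 - β) := hangle.symm
          _ < (2 * (n:ℝ) + 1) * φ := by
              apply mul_lt_mul_of_pos_left hφgt
              positivity
      have hx2 : (2 * (n:ℝ) + 1) * φ < (n : ℝ) * π + π / 2 := by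
        have : (2 * (n:ℝ) + 1) * (π / 2) = (n:ℝ) * π + π / 2 := by ring
        rw [← this]
        apply mul_lt_mul_of_pos_left hφlt
        positivity
      have hsin : Real.sin ((2 * (n:ℝ) + 1) * φ) ≠ 0 := by
        have hrw : (2 * (n:ℝ) + 1) * φ = ((2 * (n:ℝ) + 1) * φ - n * π) + n * π := by ring
        rw [hrw, Real.sin_add_nat_mul_pi]
        have hpos : 0 < Real.sin ((2 * (n:ℝ) + 1) * φ - n * π) := by
          apply Real.sin_pos_of_pos_of_lt_pi
          · linarith
          · linarith [Real.pi_pos]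
        intro hcontra
        rcases mul_eq_zero.mp hcontra with h' | h'
        · exact (pow_ne_zero n (by norm_num : (-1:ℝ) ≠ 0)) h'
        · exact hpos.ne' h'
      intro hsum0
      rw [hsum0, mul_zero] at hk
      have him : (((a : ℂ) * Complex.I + (s : ℂ)) ^ (2 * n + 1)).im = 0 := by
        rcases mul_eq_zero.mp hk.symm with h' | h'
        · exact absurd h' (pow_ne_zero n (by norm_num))
        · exact h'
      rw [him] at hp
      have hcast : ((2 * n + 1 : ℕ) : ℝ) = 2 * (n:ℝ) + 1 := by push_cast; ring
      rw [hcast] at hp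
      have hfac : (s / Real.cos φ) ^ (2 * n + 1) ≠ 0 := by
        have : 0 < Real.cos φ := Real.cos_arctan_pos _
        positivity
      have : Real.sin ((2 * (n:ℝ) + 1) * φ) = 0 := by
        rcases mul_eq_zero.mp hp.symm with h' | h'
        · exact absurd h' hfac
        · exact h'
      exact hsin this
    · -- r = 0
      rw [hzero]
      rw [Finset.sum_eq_single n]
      · rw [Nat.sub_self, pow_zero, Nat.choose_self, Nat.cast_one, one_mul, one_mul]
        positivity
      · intro j hj hjne
        have hj' : j < n := lt_of_le_of_ne (Nat.lt_succ_iff.mp (Finset.mem_range.mp hj)) hjne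
        rw [zero_pow (by omega : n - j ≠ 0)]
        ring
      · intro hcontra
        exact absurd (Finset.self_mem_range_succ n) hcontra
    · -- r > 0 : all terms nonnegative, top term positive
      have : 0 < ∑ j ∈ Finset.range (n + 1),
          ((2 * n + 1).choose (2 * j + 1) : ℝ) * r ^ (n - j) * a ^ (2 * j) := by
        apply Finset.sum_pos
        · intro j hj
          have hj' : j ≤ n := Nat.lt_succ_iff.mp (Finset.mem_range.mp hj)
          have hc : 0 < (2 * n + 1).choose (2 * j + 1) := Nat.choose_pos (by omega)
          have hc' : (0:ℝ) < ((2 * n + 1).choose (2 * j + 1) : ℝ) := by exact_mod_cast hc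
          positivity
        · exact ⟨n, Finset.self_mem_range_succ n⟩
      exact this.ne'
end
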